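/- For every even integer n ≥ 6, consider the path P_n with vertices u_1, ..., u_n and the function f defined on (V(P_n) ∪ E(P_n)) \ {u_1} by: f(u_i) = 2n − i for odd i ≥ 3, f(u_i) = 2n − 2 − i for even i ≠ n, f(u_n) = 2n − 2, f(u_i u_{i+1}) = (i+1)/2 for odd i ≥ 1, and f(u_i u_{i+1}) = (n+i)/2 for even i. Then f is a bijection onto {1, 2, ..., 2n−2}, and the induced weights satisfy w(u_i) = 5n/2 for odd i ≥ 3 and w(u_i) = 5n/2 − 2 for even i. -/
import Mathlib


/-- For every even `n ≥ 6`, consider the path `P_n` with vertices `u_1, …, u_n` (the vertex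
`u_i` is encoded as `Sum.inl i` and the edge `u_i u_{i+1}` as `Sum.inr i`) and the partial
labeling `f` on `(V(P_n) ∪ E(P_n)) \\ {u_1}` given by `f(u_i) = 2n − i` for odd `i ≥ 3`,
`f(u_i) = 2n − 2 − i` for even `i ≠ n`, `f(u_n) = 2n − 2`, `f(u_i u_{i+1}) = (i+1)/2` for
odd `i` and `f(u_i u_{i+1}) = (n+i)/2` for even `i`. Then `f` is a bijection onto
`{1, …, 2n−2}` and the induced weights satisfy `w(u_i) = 5n/2` for odd `i ≥ 3` and
`w(u_i) = 5n/2 − 2` for even `i`. -/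
theorem path_partial_labeling (n : ℕ) (hn : Even n) (h6 : 6 ≤ n)
    (fv fe : ℕ → ℕ)
    (hfv : ∀ i, fv i = if i = n then 2 * n - 2
      else if Odd i then 2 * n - i else 2 * n - 2 - i)
    (hfe : ∀ i, fe i = if Odd i then (i + 1) / 2 else (n + i) / 2) :
    Set.BijOn (Sum.elim fv fe)
      (Sum.inl '' Set.Icc 2 n ∪ Sum.inr '' Set.Icc 1 (n - 1))
      (Set.Icc 1 (2 * n - 2)) ∧
    (∀ i, 3 ≤ i → i ≤ n → Odd i → fv i + fe (i - 1) + fe i = 5 * n / 2) ∧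
    (∀ i, 2 ≤ i → i < n → Even i → fv i + fe (i - 1) + fe i = 5 * n / 2 - 2) ∧
    fv n + fe (n - 1) = 5 * n / 2 - 2 := by
  have hn2 : n % 2 = 0 := Nat.even_iff.mp hn
  have hfv' : ∀ i, fv i = if i = n then 2 * n - 2
      else if i % 2 = 1 then 2 * n - i else 2 * n - 2 - i := by
    intro i; rw [hfv]; simp [Nat.odd_iff]
  have hfe' : ∀ i, fe i = if i % 2 = 1 then (i + 1) / 2 else (n + i) / 2 := by
    intro i; rw [hfe]; simp [Nat.odd_iff]
  refine ⟨⟨?_, ?_, ?_⟩, ?_, ?_, ?_⟩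
  · -- MapsTo
    rintro x hx
    rcases hx with ⟨i, ⟨hi1, hi2⟩, rfl⟩ | ⟨i, ⟨hi1, hi2⟩, rfl⟩
    · simp only [Sum.elim_inl, hfv', Set.mem_Icc]
      split_ifs <;> omega
    · simp only [Sum.elim_inr, hfe', Set.mem_Icc]
      split_ifs <;> omega
  · -- InjOn
    rintro x hx y hy hxy
    rcases hx with ⟨i, ⟨hi1, hi2⟩, rfl⟩ | ⟨i, ⟨hi1, hi2⟩, rfl⟩ <;>
      rcases hy with ⟨j, ⟨hj1, hj2⟩, rfl⟩ | ⟨j, ⟨hj1, hj2⟩, rfl⟩ <;>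
      simp only [Sum.elim_inl, Sum.elim_inr, hfv', hfe', Sum.inl.injEq,
        Sum.inr.injEq, reduceCtorEq] at hxy ⊢ <;>
      split_ifs at hxy <;> omega
  · -- SurjOn
    rintro m ⟨h1, h2⟩
    by_cases hc1 : m ≤ n / 2
    · refine ⟨Sum.inr (2 * m - 1), Or.inr ⟨2 * m - 1, ⟨by omega, by omega⟩, rfl⟩, ?_⟩
      simp only [Sum.elim_inr, hfe']
      split_ifs <;> omega
    by_cases hc2 : m ≤ n - 1
    · refine ⟨Sum.inr (2 * m - n), Or.inr ⟨2 * m - n, ⟨by omega, by omega⟩, rfl⟩, ?_⟩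
      simp only [Sum.elim_inr, hfe']
      split_ifs <;> omega
    by_cases hc3 : m = 2 * n - 2
    · refine ⟨Sum.inl n, Or.inl ⟨n, ⟨by omega, le_rfl⟩, rfl⟩, ?_⟩
      simp only [Sum.elim_inl, hfv']
      split_ifs <;> omega
    by_cases hc4 : m % 2 = 1
    · refine ⟨Sum.inl (2 * n - m), Or.inl ⟨2 * n - m, ⟨by omega, by omega⟩, rfl⟩, ?_⟩
      simp only [Sum.elim_inl, hfv']
      split_ifs <;> omega
    · refine ⟨Sum.inl (2 * n - 2 - m), Or.inl ⟨2 * n - 2 - m, ⟨by omega, by omega⟩, rfl⟩, ?_⟩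
      simp only [Sum.elim_inl, hfv']
      split_ifs <;> omega
  · intro i h3 hin hodd
    have h := Nat.odd_iff.mp hodd
    rw [hfv', hfe', hfe']
    split_ifs <;> omega
  · intro i h2 hin heven
    have h := Nat.even_iff.mp heven
    rw [hfv', hfe', hfe']
    split_ifs <;> omega
  · rw [hfv', hfe']
    split_ifs <;> omega
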